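/- Let E be a row-finite directed graph, K a field, and H a hereditary subset of E^0 with hereditary saturated closure H̄. Then the two-sided ideal of the Leavitt path algebra L_K(E) generated by {v : v ∈ H} equals the two-sided ideal generated by {v : v ∈ H̄}. -/

import Mathlib

/-!
For any two-sided ideal `I` of `L_K(E)`, the set of vertices `v` with `v ∈ I` is hereditary,
since `r(e) = e* s(e) e` by (CK1), and, for a row-finite graph, saturated, since
`v = Σ e e* = Σ e r(e) e*` by (CK2). Applied to the ideal generated by `H`, this set contains `H`,
hence contains `H̄`.
-/

/-- Generators of a Leavitt path algebra: vertices, edges, and ghost edges. -/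
inductive LPAGen (V E : Type*) : Type _
  | vertex : V → LPAGen V E
  | edge : E → LPAGen V E
  | ghost : E → LPAGen V E

variable (K : Type*) [Field K] {V E : Type*} (s r : E → V)

open FreeAlgebra in
/-- The defining relations of the Leavitt path algebra of the graph `(V, E, s, r)` over `K`:
the vertices are mutually orthogonal idempotents, edges and ghost edges are compatible with
sources and ranges, the Cuntz–Krieger relations (CK1) and (CK2) hold, and (when the vertex
set is finite) the sum of the vertices is the identity. -/
inductive LPARel : FreeAlgebra K (LPAGen V E) → FreeAlgebra K (LPAGen V E) → Prop
  | vertex_idem (v : V) :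
      LPARel (ι K (LPAGen.vertex (E := E) v) * ι K (LPAGen.vertex v)) (ι K (LPAGen.vertex v))
  | vertex_orth (v w : V) : v ≠ w →
      LPARel (ι K (LPAGen.vertex (E := E) v) * ι K (LPAGen.vertex w)) 0
  | source_edge (e : E) :
      LPARel (ι K (LPAGen.vertex (s e)) * ι K (LPAGen.edge (V := V) e)) (ι K (LPAGen.edge e))
  | edge_range (e : E) :
      LPARel (ι K (LPAGen.edge (V := V) e) * ι K (LPAGen.vertex (r e))) (ι K (LPAGen.edge e))
  | range_ghost (e : E) :
      LPARel (ι K (LPAGen.vertex (r e)) * ι K (LPAGen.ghost (V := V) e)) (ι K (LPAGen.ghost e))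
  | ghost_source (e : E) :
      LPARel (ι K (LPAGen.ghost (V := V) e) * ι K (LPAGen.vertex (s e))) (ι K (LPAGen.ghost e))
  | ck1 (e : E) :
      LPARel (ι K (LPAGen.ghost (V := V) e) * ι K (LPAGen.edge e)) (ι K (LPAGen.vertex (r e)))
  | ck1_orth (e f : E) : e ≠ f →
      LPARel (ι K (LPAGen.ghost (V := V) e) * ι K (LPAGen.edge f)) 0
  | ck2 (v : V) (S : Finset E) : (↑S = s ⁻¹' {v}) → S.Nonempty →
      LPARel (ι K (LPAGen.vertex (E := E) v))
        (∑ e ∈ S, ι K (LPAGen.edge (V := V) e) * ι K (LPAGen.ghost e))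
  | unit (S : Finset V) : (↑S = (Set.univ : Set V)) →
      LPARel 1 (∑ v ∈ S, ι K (LPAGen.vertex (E := E) v))

/-- The Leavitt path algebra of the graph `(V, E, s, r)` over the field `K`. -/
def LeavittPathAlgebra : Type _ := RingQuot (LPARel K s r)

noncomputable instance : Ring (LeavittPathAlgebra K s r) :=
  inferInstanceAs (Ring (RingQuot (LPARel K s r)))

noncomputable instance : Algebra K (LeavittPathAlgebra K s r) :=
  inferInstanceAs (Algebra K (RingQuot (LPARel K s r)))

/-- The image in the Leavitt path algebra of a vertex `v`. -/
noncomputable def lpaVertex (v : V) : LeavittPathAlgebra K s r :=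
  RingQuot.mkAlgHom K (LPARel K s r) (FreeAlgebra.ι K (LPAGen.vertex v))

/-- The image in the Leavitt path algebra of an edge `e`. -/
noncomputable def lpaEdge (e : E) : LeavittPathAlgebra K s r :=
  RingQuot.mkAlgHom K (LPARel K s r) (FreeAlgebra.ι K (LPAGen.edge e))

/-- A subset `H` of the vertices is hereditary if every edge with source in `H` has
range in `H`. -/
def GraphHereditary (H : Set V) : Prop := ∀ e : E, s e ∈ H → r e ∈ H

/-- A subset `X` of the vertices is saturated if every vertex which is not a sink and all of
whose emitted edges have range in `X` belongs to `X`. -/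
def GraphSaturated (X : Set V) : Prop :=
  ∀ v : V, (∃ e, s e = v) → (∀ e, s e = v → r e ∈ X) → v ∈ X

/-- The hereditary saturated closure of a set of vertices: the smallest hereditary and
saturated subset containing it. -/
def HSClosure (H : Set V) : Set V :=
  ⋂₀ {X : Set V | GraphHereditary s r X ∧ GraphSaturated s r X ∧ H ⊆ X}

noncomputable def lpaGhost (e : E) : LeavittPathAlgebra K s r :=
  RingQuot.mkAlgHom K (LPARel K s r) (FreeAlgebra.ι K (LPAGen.ghost e))

lemma lpaGhost_mul_lpaVertex_source (e : E) :
    lpaGhost K s r e * lpaVertex K s r (s e) = lpaGhost K s r e :=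
  (map_mul _ _ _).symm.trans <| RingQuot.mkAlgHom_rel K <| LPARel.ghost_source (s := s) (r := r) e

lemma lpaGhost_mul_lpaEdge (e : E) :
    lpaGhost K s r e * lpaEdge K s r e = lpaVertex K s r (r e) :=
  (map_mul _ _ _).symm.trans <| RingQuot.mkAlgHom_rel K <| LPARel.ck1 (s := s) (r := r) e

lemma lpaVertex_range_mul_lpaGhost (e : E) :
    lpaVertex K s r (r e) * lpaGhost K s r e = lpaGhost K s r e :=
  (map_mul _ _ _).symm.trans <| RingQuot.mkAlgHom_rel K <| LPARel.range_ghost (s := s) (r := r) e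

lemma lpaVertex_eq_sum_lpaEdge_mul_lpaGhost (v : V) (S : Finset E) (hS : ↑S = s ⁻¹' {v})
    (hne : S.Nonempty) :
    lpaVertex K s r v = ∑ e ∈ S, lpaEdge K s r e * lpaGhost K s r e :=
  (RingQuot.mkAlgHom_rel K <| LPARel.ck2 (s := s) (r := r) v S hS hne).trans <| by
    simp only [map_sum, map_mul]; rfl

lemma graphHereditary_vertices_mem (I : TwoSidedIdeal (LeavittPathAlgebra K s r)) :
    GraphHereditary s r {v | lpaVertex K s r v ∈ I} := by
  intro e he
  have hfactor : lpaVertex K s r (r e)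
      = lpaGhost K s r e * lpaVertex K s r (s e) * lpaEdge K s r e := by
    rw [lpaGhost_mul_lpaVertex_source, lpaGhost_mul_lpaEdge]
  show lpaVertex K s r (r e) ∈ I
  rw [hfactor]
  exact I.mul_mem_right _ _ (I.mul_mem_left _ _ he)

lemma graphSaturated_vertices_mem (hrow : ∀ v : V, (s ⁻¹' {v}).Finite)
    (I : TwoSidedIdeal (LeavittPathAlgebra K s r)) :
    GraphSaturated s r {v | lpaVertex K s r v ∈ I} := by
  intro v ⟨e₀, he₀⟩ hrange
  have hne : (hrow v).toFinset.Nonempty := ⟨e₀, (hrow v).mem_toFinset.mpr he₀⟩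
  show lpaVertex K s r v ∈ I
  rw [lpaVertex_eq_sum_lpaEdge_mul_lpaGhost K s r v _ (hrow v).coe_toFinset hne]
  refine I.finsetSum_mem _ _ fun e he => ?_
  rw [← lpaVertex_range_mul_lpaGhost, ← mul_assoc]
  exact I.mul_mem_right _ _ (I.mul_mem_left _ _ (hrange e ((hrow v).mem_toFinset.mp he)))

lemma subset_hsClosure (H : Set V) : H ⊆ HSClosure s r H :=
  fun _ hv _ hX => hX.2.2 hv

lemma hsClosure_subset {H X : Set V} (hXh : GraphHereditary s r X) (hXs : GraphSaturated s r X)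
    (hHX : H ⊆ X) : HSClosure s r H ⊆ X :=
  Set.sInter_subset_of_mem ⟨hXh, hXs, hHX⟩

theorem stmt11 (hrow : ∀ v : V, (s ⁻¹' {v}).Finite) (H : Set V) :
    TwoSidedIdeal.span ((fun v => lpaVertex K s r v) '' H) =
      TwoSidedIdeal.span ((fun v => lpaVertex K s r v) '' HSClosure s r H) := by
  set I := TwoSidedIdeal.span ((fun v => lpaVertex K s r v) '' H)
  refine le_antisymm (TwoSidedIdeal.span_mono (Set.image_mono (subset_hsClosure s r H))) ?_
  rw [TwoSidedIdeal.span_le, Set.image_subset_iff]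
  exact hsClosure_subset s r (graphHereditary_vertices_mem K s r I)
    (graphSaturated_vertices_mem K s r hrow I)
    (Set.image_subset_iff.mp TwoSidedIdeal.subset_span)
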